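/- Let σ be a type and ts = [(S₁,b₁),…,(Sₙ,bₙ)] a list of n pairs of a subset of σ and a Boolean star flag. Then there exists a nondeterministic finite automaton over σ with state type Fin (n+1) whose accepted language equals the concatenation of the universal language over σ with L(ts), i.e. the set {u ++ v | u : List σ, v ∈ L(ts)} of words ending in a match of the chain. -/

import Mathlib

/-- The single-symbol language of a set `S ⊆ σ`: all length-one words whose letter lies in `S`. -/
def singleLang {σ : Type} (S : Set σ) : Language σ := {w | ∃ a ∈ S, w = [a]}

/-- The chain language of a list `ts = [(S₁,b₁),…,(Sₙ,bₙ)]`: the concatenation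
`L₁ * ⋯ * Lₙ` where `Lᵢ` is the single-symbol language of `Sᵢ` if `bᵢ = false`, and its
Kleene star if `bᵢ = true`. -/
def chainLang {σ : Type} (ts : List (Set σ × Bool)) : Language σ :=
  (ts.map fun p => if p.2 then KStar.kstar (singleLang p.1) else singleLang p.1).prod

/-!
State `j` of the monitor records that some suffix of the input read so far matches the first `j`
entries of the chain. Starred entries matching the empty word are skipped inside the transitions,
so no ε-moves are needed, and state `0` is active after every prefix, which realises the
universal prefix. Correctness is this invariant, proved by induction on the input: a match of
`l` ending in the letter `a` consists of a decomposition `l = l₁ ++ p :: l₂` in which `p` consumes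
`a`, every entry of `l₂` is skipped, and the word before `a` matches `l₁` or, if `p` is starred,
`l₁ ++ [p]`.
-/

open scoped Computability

theorem List.take_eq_of_take_eq_append_cons {α : Type*} {l l₁ l₂ : List α} {p : α} {j : ℕ}
    (h : l.take j = l₁ ++ p :: l₂) :
    l.take l₁.length = l₁ ∧ l.take (l₁.length + 1) = l₁ ++ [p] := by
  have take_length_of_prefix {l' : List α} (h' : l' <+: l.take j) : l.take l'.length = l' :=
    (List.prefix_iff_eq_take.1 (List.prefix_take_iff.1 h').1).symm
  exact ⟨take_length_of_prefix ⟨p :: l₂, h.symm⟩,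
    by simpa using take_length_of_prefix (l' := l₁ ++ [p]) ⟨l₂, by simp [h]⟩⟩

namespace Language

variable {α : Type*}

theorem nil_mem_mul_iff {L M : Language α} : [] ∈ L * M ↔ [] ∈ L ∧ [] ∈ M := by
  simp [mem_mul]

theorem append_singleton_mem_mul_iff {L M : Language α} {w : List α} {a : α} :
    w ++ [a] ∈ L * M ↔
      ([] ∈ M ∧ w ++ [a] ∈ L) ∨ ∃ x y, w = x ++ y ∧ x ∈ L ∧ y ++ [a] ∈ M := by
  constructor
  · rintro ⟨x, hx, y, hy, hxy⟩
    obtain rfl | ⟨y, b, rfl⟩ := y.eq_nil_or_concat'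
    · obtain rfl : x = w ++ [a] := by simpa using hxy
      exact Or.inl ⟨hy, hx⟩
    · obtain ⟨rfl, rfl⟩ : x ++ y = w ∧ b = a := by simpa [← List.append_assoc] using hxy
      exact Or.inr ⟨x, y, rfl, hx, hy⟩
  · rintro (⟨hM, hL⟩ | ⟨x, y, rfl, hx, hy⟩)
    · simpa using append_mem_mul hL hM
    · simpa using append_mem_mul hx hy

end Language

section

variable {σ : Type}

open Language

theorem mem_singleLang {S : Set σ} {w : List σ} : w ∈ singleLang S ↔ ∃ a ∈ S, w = [a] :=
  Iff.rfl

theorem append_singleton_mem_mul_singleLang_iff {L : Language σ} {S : Set σ} {w : List σ}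
    {a : σ} : w ++ [a] ∈ L * singleLang S ↔ w ∈ L ∧ a ∈ S := by
  simp only [mem_mul, mem_singleLang]
  constructor
  · rintro ⟨x, hx, _, ⟨b, hb, rfl⟩, h⟩
    obtain ⟨rfl, rfl⟩ : x = w ∧ b = a := by simpa using h
    exact ⟨hx, hb⟩
  · rintro ⟨hw, ha⟩
    exact ⟨w, hw, [a], ⟨a, ha, rfl⟩, rfl⟩

theorem append_singleton_mem_kstar_singleLang_iff {S : Set σ} {w : List σ} {a : σ} :
    w ++ [a] ∈ (singleLang S)∗ ↔ w ∈ (singleLang S)∗ ∧ a ∈ S := by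
  conv_lhs => rw [← one_add_kstar_mul_self_eq_kstar]
  rw [mem_add, mem_one, append_singleton_mem_mul_singleLang_iff]
  simp

def entryLang (p : Set σ × Bool) : Language σ :=
  if p.2 then (singleLang p.1)∗ else singleLang p.1

theorem nil_mem_entryLang_iff {p : Set σ × Bool} : [] ∈ entryLang p ↔ p.2 = true := by
  obtain ⟨S, _ | _⟩ := p <;> simp [entryLang, nil_mem_kstar, mem_singleLang]

theorem append_singleton_mem_entryLang_iff {p : Set σ × Bool} {w : List σ} {a : σ} :
    w ++ [a] ∈ entryLang p ↔ a ∈ p.1 ∧ (w = [] ∨ p.2 = true ∧ w ∈ entryLang p) := by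
  obtain ⟨S, _ | _⟩ := p
  · simp only [entryLang, Bool.false_eq_true, if_false, false_and, or_false]
    rw [← one_mul (singleLang S), append_singleton_mem_mul_singleLang_iff, mem_one, and_comm]
  · simp only [entryLang, if_true, append_singleton_mem_kstar_singleLang_iff, true_and]
    rw [or_iff_right_of_imp fun h => h ▸ nil_mem_kstar _, and_comm]

theorem chainLang_nil : chainLang ([] : List (Set σ × Bool)) = 1 := rfl

theorem chainLang_concat (l : List (Set σ × Bool)) (p : Set σ × Bool) :
    chainLang (l ++ [p]) = chainLang l * entryLang p := by
  simp [chainLang, entryLang]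

theorem append_singleton_mem_chainLang_iff {l : List (Set σ × Bool)} {v : List σ} {a : σ} :
    v ++ [a] ∈ chainLang l ↔ ∃ l₁ p l₂, l = l₁ ++ p :: l₂ ∧ a ∈ p.1 ∧ [] ∈ chainLang l₂ ∧
      (v ∈ chainLang l₁ ∨ p.2 = true ∧ v ∈ chainLang (l₁ ++ [p])) := by
  induction l using List.reverseRecOn with
  | nil => simp [chainLang_nil, mem_one]
  | append_singleton l q ih =>
    rw [chainLang_concat, append_singleton_mem_mul_iff, ih, nil_mem_entryLang_iff]
    simp only [append_singleton_mem_entryLang_iff]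
    constructor
    · rintro (⟨hq, l₁, p, l₂, rfl, ha, hl₂, hv⟩ |
        ⟨x, y, rfl, hx, ha, rfl | ⟨hq, hy⟩⟩)
      · refine ⟨l₁, p, l₂ ++ [q], by simp, ha, ?_, hv⟩
        rw [chainLang_concat]
        exact nil_mem_mul_iff.2 ⟨hl₂, nil_mem_entryLang_iff.2 hq⟩
      · exact ⟨l, q, [], rfl, ha, nil_mem_one, Or.inl (by simpa using hx)⟩
      · refine ⟨l, q, [], rfl, ha, nil_mem_one, Or.inr ⟨hq, ?_⟩⟩
        rw [chainLang_concat]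
        exact append_mem_mul hx hy
    · rintro ⟨l₁, p, l₂, h, ha, hl₂, hv⟩
      obtain rfl | ⟨l₂, q', rfl⟩ := l₂.eq_nil_or_concat'
      · obtain ⟨rfl, rfl⟩ : l = l₁ ∧ q = p := by simpa using h
        right
        rcases hv with hv | ⟨hp, hv⟩
        · exact ⟨v, [], by simp, hv, ha, Or.inl rfl⟩
        · rw [chainLang_concat] at hv
          obtain ⟨x, hx, y, hy, rfl⟩ := mem_mul.1 hv
          exact ⟨x, y, rfl, hx, ha, Or.inr ⟨hp, hy⟩⟩
      · rw [← List.cons_append, ← List.append_assoc] at h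
        obtain ⟨rfl, ⟨⟩⟩ := List.append_inj' h rfl
        rw [chainLang_concat, nil_mem_mul_iff, nil_mem_entryLang_iff] at hl₂
        exact Or.inl ⟨hl₂.2, l₁, p, l₂, rfl, ha, hl₂.1, hv⟩

def chainMonitor (ts : List (Set σ × Bool)) : NFA σ (Fin (ts.length + 1)) where
  step s a := {j | (s = 0 ∧ [] ∈ chainLang (ts.take j)) ∨
    ∃ l₁ p l₂, ts.take j = l₁ ++ p :: l₂ ∧ a ∈ p.1 ∧ [] ∈ chainLang l₂ ∧
      ((s : ℕ) = l₁.length ∨ p.2 = true ∧ (s : ℕ) = l₁.length + 1)}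
  start := {j | [] ∈ chainLang (ts.take j)}
  accept := {Fin.last _}

theorem mem_eval_chainMonitor_iff {ts : List (Set σ × Bool)} {w : List σ}
    {j : Fin (ts.length + 1)} :
    j ∈ (chainMonitor ts).eval w ↔ ∃ v, v <:+ w ∧ v ∈ chainLang (ts.take j) := by
  induction w using List.reverseRecOn generalizing j with
  | nil => simp [chainMonitor]
  | append_singleton w a ih =>
    simp only [NFA.eval_append_singleton, NFA.mem_stepSet, ih, List.suffix_concat_iff]
    simp only [chainMonitor, Set.mem_ofPred_eq]
    constructor
    · rintro ⟨s, ⟨v, hv, hvs⟩, ⟨-, hnil⟩ | ⟨l₁, p, l₂, htake, ha, hl₂, hs⟩⟩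
      · exact ⟨[], Or.inl rfl, hnil⟩
      have ⟨htake₁, htake₂⟩ := List.take_eq_of_take_eq_append_cons htake
      refine ⟨v ++ [a], Or.inr ⟨v, rfl, hv⟩, append_singleton_mem_chainLang_iff.2
        ⟨l₁, p, l₂, htake, ha, hl₂, ?_⟩⟩
      rcases hs with hs | ⟨hp, hs⟩
      · rw [hs, htake₁] at hvs
        exact Or.inl hvs
      · rw [hs, htake₂] at hvs
        exact Or.inr ⟨hp, hvs⟩
    · rintro ⟨_, rfl | ⟨v, rfl, hv⟩, hvj⟩
      · exact ⟨0, ⟨[], List.nil_suffix, nil_mem_one⟩, Or.inl ⟨rfl, hvj⟩⟩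
      obtain ⟨l₁, p, l₂, htake, ha, hl₂, hv₁⟩ := append_singleton_mem_chainLang_iff.1 hvj
      have ⟨htake₁, htake₂⟩ := List.take_eq_of_take_eq_append_cons htake
      have hlen := (congrArg List.length htake).symm.trans_le (List.length_take_le' _ _)
      simp only [List.length_append, List.length_cons] at hlen
      rcases hv₁ with hv₁ | ⟨hp, hv₁⟩
      · refine ⟨⟨l₁.length, by omega⟩, ⟨v, hv, ?_⟩,
          Or.inr ⟨l₁, p, l₂, htake, ha, hl₂, Or.inl rfl⟩⟩
        rwa [Fin.val_mk, htake₁]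
      · refine ⟨⟨l₁.length + 1, by omega⟩, ⟨v, hv, ?_⟩,
          Or.inr ⟨l₁, p, l₂, htake, ha, hl₂, Or.inr ⟨hp, rfl⟩⟩⟩
        rwa [Fin.val_mk, htake₂]

theorem mem_accepts_chainMonitor_iff {ts : List (Set σ × Bool)} {w : List σ} :
    w ∈ (chainMonitor ts).accepts ↔ ∃ v, v <:+ w ∧ v ∈ chainLang ts := by
  change (∃ j ∈ ({Fin.last _} : Set _), j ∈ (chainMonitor ts).eval w) ↔ _
  simp [mem_eval_chainMonitor_iff]

end

/-- Monitor automaton: for every list `ts` of `n` pairs there is an NFA over `σ` with state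
type `Fin (n+1)` accepting exactly the words ending in a match of the chain, i.e. the
concatenation of the universal language over `σ` with `L(ts)`. -/
theorem chain_monitor_nfa_exists {σ : Type} (ts : List (Set σ × Bool)) :
    ∃ M : NFA σ (Fin (ts.length + 1)),
      M.accepts = {w : List σ | ∃ (u v : List σ), v ∈ chainLang ts ∧ w = u ++ v} := by
  refine ⟨chainMonitor ts, Language.ext fun w => mem_accepts_chainMonitor_iff.trans ?_⟩
  exact ⟨fun ⟨v, ⟨u, hw⟩, hv⟩ => ⟨u, v, hv, hw.symm⟩,
    fun ⟨u, v, hv, hw⟩ => ⟨v, ⟨u, hw.symm⟩, hv⟩⟩
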